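/- Interpolation lemma for functions with elliptic-type transformation behavior. Let f be analytic on ℂ \ {0} and satisfy f(qx) = f(x)/(q³x⁶) and f(1/x) = −f(x) for all x ≠ 0. Let c1, c2 be nonzero complex numbers such that none of c1², c2², c1c2, c1/c2 is a power of q. Then for all x ≠ 0, f(x) = x^{−1}θ(x²)·[ c1·θ(c2x)θ(c2/x)·f(c1)/(θ(c1²)θ(c2c1)θ(c2/c1)) + c2·θ(c1x)θ(c1/x)·f(c2)/(θ(c2²)θ(c1c2)θ(c1/c2)) ]. In particular, f is uniquely determined by the values f(c1) and f(c2). -/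

import Mathlib

open Complex BigOperators Filter Topology Set Metric

noncomputable section

/-- The `q`-shifted factorial `(a;q)_k` for an integer `k`. -/
def qPoch (q a : ℂ) (k : ℤ) : ℂ :=
  if 0 ≤ k then ∏ j ∈ Finset.range k.toNat, (1 - a * q ^ j)
  else (∏ j ∈ Finset.range (-k).toNat, (1 - a * q ^ (-((j : ℤ) + 1))))⁻¹

/-- The infinite `q`-shifted factorial `(a;q)_∞`. -/
def qPochInf (q a : ℂ) : ℂ := ∏' j : ℕ, (1 - a * q ^ j)

/-- The theta function `θ(x) = (x;q)_∞ (q/x;q)_∞`. -/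
def qTheta (q x : ℂ) : ℂ := qPochInf q x * qPochInf q (q / x)

/-- `w` is an integer power of `q`. -/
def IsQPow (q w : ℂ) : Prop := ∃ n : ℤ, w = q ^ n

/-- `(1/(2πi)) ∮_{|z|=r} F(z) dz/z`, over the positively oriented circle `|z| = r`. -/
def cInt (F : ℂ → ℂ) (r : ℝ) : ℂ :=
  (2 * Real.pi * Complex.I)⁻¹ * ∮ z in C(0, r), F z / z

set_option linter.unusedVariables false
set_option linter.unusedSectionVars false

lemma hasProd_zero_of_eq_zero {f : ℕ → ℂ} {j0 : ℕ} (h : f j0 = 0) : HasProd f 0 := by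
  have hev : (fun _ : Finset ℕ => (0 : ℂ)) =ᶠ[atTop] fun s => ∏ i ∈ s, f i := by
    filter_upwards [Filter.eventually_ge_atTop ({j0} : Finset ℕ)] with s hs
    exact (Finset.prod_eq_zero (hs (Finset.mem_singleton_self j0)) h).symm
  exact (tendsto_const_nhds.congr' hev : _)

section q
variable {q : ℂ} (hq1 : ‖q‖ < 1)
include hq1

lemma summable_log (a : ℂ) (h : ∀ j : ℕ, a * q ^ j ≠ 1) :
    Summable (fun j : ℕ => Complex.log (1 - a * q ^ j)) := by
  have hq1' : ‖q‖ < 1 := hq1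
  have htend : Tendsto (fun n : ℕ => ‖a‖ * ‖q‖ ^ n) atTop (𝓝 0) := by
    simpa using (tendsto_pow_atTop_nhds_zero_of_lt_one (norm_nonneg q) hq1').const_mul ‖a‖
  obtain ⟨N, hN⟩ := (htend.eventually
    (eventually_le_nhds (by norm_num : (0:ℝ) < 1/2))).exists_forall_of_atTop
  rw [← summable_nat_add_iff N]
  have hbound : ∀ j : ℕ, ‖Complex.log (1 - a * q ^ (j + N))‖ ≤ (3/2) * ‖a‖ * ‖q‖^N * ‖q‖ ^ j := by
    intro j
    have h1 : ‖-(a * q ^ (j + N))‖ ≤ 1/2 := by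
      rw [norm_neg, norm_mul, norm_pow]
      calc ‖a‖ * ‖q‖ ^ (j + N) ≤ ‖a‖ * ‖q‖ ^ N := by
            apply mul_le_mul_of_nonneg_left _ (norm_nonneg a)
            exact pow_le_pow_of_le_one (norm_nonneg q) hq1'.le (by omega)
        _ ≤ 1/2 := hN N le_rfl
    have h2 := Complex.norm_log_one_add_half_le_self h1
    rw [show (1 : ℂ) + -(a * q ^ (j + N)) = 1 - a * q ^ (j+N) by ring] at h2
    refine h2.trans (le_of_eq ?_)
    rw [norm_neg, norm_mul, norm_pow, pow_add]
    ring
  apply Summable.of_norm_bounded _ hbound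
  simpa [mul_assoc] using ((summable_geometric_of_lt_one (norm_nonneg q)
    hq1').mul_left ((3/2) * ‖a‖ * ‖q‖^N))

lemma qPochInf_ne_zero (a : ℂ) (h : ∀ j : ℕ, a * q ^ j ≠ 1) : qPochInf q a ≠ 0 := by
  have hfn : ∀ (x : Unit) (n : ℕ), (fun (j : ℕ) (_ : Unit) => 1 - a * q ^ j) n x ≠ 0 := by
    intro _ n
    simpa [sub_eq_zero] using fun hh => h n hh.symm
  have hs : ∀ (_ : Unit), Summable fun n : ℕ => Complex.log (1 - a * q ^ n) :=
    fun _ => summable_log hq1 a h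
  have h2 := Complex.cexp_tsum_eq_tprod (f := fun j : ℕ => 1 - a * q ^ j) (fun n => hfn () n) (hs ())
  show (∏' j : ℕ, (1 - a * q ^ j)) ≠ 0
  rw [← h2]
  exact Complex.exp_ne_zero _

omit hq1

lemma qPochInf_eq_zero (a : ℂ) {j : ℕ} (h : a * q ^ j = 1) : qPochInf q a = 0 :=
  (hasProd_zero_of_eq_zero (f := fun j : ℕ => 1 - a * q ^ j) (j0 := j)
    (by simp [h])).tprod_eq

include hq1

lemma multipliable_qPochInf (a : ℂ) : Multipliable (fun j : ℕ => 1 - a * q ^ j) := by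
  by_cases h : ∀ j : ℕ, a * q ^ j ≠ 1
  · have hfn : ∀ (x : Unit) (n : ℕ), (fun (j : ℕ) (_ : Unit) => 1 - a * q ^ j) n x ≠ 0 := by
      intro _ n
      simpa [sub_eq_zero] using fun hh => h n hh.symm
    exact Complex.multipliable_of_summable_log (summable_log hq1 a h)
  · push_neg at h
    obtain ⟨j, hj⟩ := h
    exact ⟨0, hasProd_zero_of_eq_zero (j0 := j) (by simp [hj])⟩

set_option maxHeartbeats 1000000 in
lemma qPochInf_shift (a : ℂ) : qPochInf q a = (1 - a) * qPochInf q (q * a) := by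
  have hm : Multipliable (fun n : ℕ => 1 - a * q ^ (n + 1)) := by
    have := multipliable_qPochInf hq1 (q * a)
    apply this.congr
    intro n; ring
  have h := tprod_eq_zero_mul' (f := fun j : ℕ => 1 - a * q ^ j) hm
  show (∏' j : ℕ, (1 - a * q ^ j)) = (1 - a) * ∏' j : ℕ, (1 - (q * a) * q ^ j)
  rw [h]
  congr 1
  · simp
  · congr 1
    funext j
    ring

include hq1

lemma qPochInf_eq_zero_iff (a : ℂ) : qPochInf q a = 0 ↔ ∃ j : ℕ, a * q ^ j = 1 := by
  constructor
  · intro h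
    by_contra hc
    push_neg at hc
    exact qPochInf_ne_zero hq1 a hc h
  · rintro ⟨j, hj⟩
    exact qPochInf_eq_zero a hj

lemma qPochInf_q_ne_zero : qPochInf q q ≠ 0 := by
  apply qPochInf_ne_zero hq1
  intro j hj
  have : ‖q * q ^ j‖ < 1 := by
    rw [norm_mul, norm_pow]
    calc ‖q‖ * ‖q‖^j ≤ ‖q‖ * 1 := by
          apply mul_le_mul_of_nonneg_left _ (norm_nonneg q)
          exact pow_le_one₀ (norm_nonneg q) (le_of_lt hq1)
      _ < 1 := by simpa using hq1
  rw [hj] at this; simp at this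

lemma qTheta_q_mul {x : ℂ} (hq0 : q ≠ 0) (hx : x ≠ 0) :
    qTheta q (q * x) = -x⁻¹ * qTheta q x := by
  have e1 : q / (q * x) = x⁻¹ := by field_simp
  have e2 : q / x = q * x⁻¹ := by rw [div_eq_mul_inv]
  rw [qTheta, qTheta, e1, e2, qPochInf_shift hq1 x⁻¹, qPochInf_shift hq1 x]
  field_simp
  ring

lemma qTheta_inv {x : ℂ} (hq0 : q ≠ 0) (hx : x ≠ 0) :
    qTheta q x⁻¹ = -x⁻¹ * qTheta q x := by
  have e1 : q / x⁻¹ = q * x := by field_simp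
  have e2 : q / x = q * x⁻¹ := by rw [div_eq_mul_inv]
  rw [qTheta, qTheta, e1, e2, qPochInf_shift hq1 x⁻¹, qPochInf_shift hq1 x]
  field_simp
  ring

lemma qTheta_eq_zero_iff {x : ℂ} (hq0 : q ≠ 0) (hx : x ≠ 0) :
    qTheta q x = 0 ↔ IsQPow q x := by
  rw [qTheta, mul_eq_zero, qPochInf_eq_zero_iff hq1, qPochInf_eq_zero_iff hq1]
  constructor
  · rintro (⟨j, hj⟩ | ⟨j, hj⟩)
    · refine ⟨-(j : ℤ), ?_⟩
      have : x = (q ^ j)⁻¹ := by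
        field_simp at hj ⊢
        linear_combination hj
      rw [this, zpow_neg, zpow_natCast]
    · refine ⟨(j : ℤ) + 1, ?_⟩
      have hxj : q * q ^ j = x := by
        field_simp at hj
        linear_combination hj
      rw [← hxj, zpow_add₀ hq0, zpow_natCast, zpow_one]; ring
  · rintro ⟨n, rfl⟩
    rcases le_or_gt n 0 with hn | hn
    · left
      refine ⟨(-n).toNat, ?_⟩
      rw [← zpow_natCast q (-n).toNat, Int.toNat_of_nonneg (by omega), ← zpow_add₀ hq0]
      simp
    · right
      refine ⟨(n - 1).toNat, ?_⟩
      rw [← zpow_natCast q (n-1).toNat, Int.toNat_of_nonneg (by omega)]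
      rw [div_mul_eq_mul_div, ← zpow_one_add₀ hq0, show (1 : ℤ) + (n - 1) = n by ring]
      exact div_self (zpow_ne_zero n hq0)


lemma qPochInf_differentiable : Differentiable ℂ (qPochInf q) := by
  have hq1' : ‖q‖ < 1 := hq1
  intro a0
  set R : ℝ := ‖a0‖ + 1 with hR
  have hR0 : 0 < R := by positivity
  set pp : ℕ → ℂ → ℂ := fun N a => ∏ j ∈ Finset.range N, (1 - a * q ^ j) with hpp
  set g : ℕ → ℂ → ℂ := fun n a => pp n a * (-(a * q ^ n)) with hg
  set C : ℝ := Real.exp (R / (1 - ‖q‖)) with hCdef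
  have hppb : ∀ (n : ℕ) (a : ℂ), ‖a‖ ≤ R → ‖pp n a‖ ≤ C := by
    intro n a ha
    have h1 : ‖pp n a‖ ≤ ∏ j ∈ Finset.range n, (1 + R * ‖q‖ ^ j) := by
      rw [hpp]
      simp only
      rw [norm_prod]
      apply Finset.prod_le_prod (fun j _ => norm_nonneg _)
      intro j _
      calc ‖1 - a * q ^ j‖ ≤ ‖(1:ℂ)‖ + ‖a * q ^ j‖ := norm_sub_le _ _
        _ = 1 + ‖a‖ * ‖q‖ ^ j := by rw [norm_one, norm_mul, norm_pow]
        _ ≤ 1 + R * ‖q‖ ^ j := by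
            have := mul_le_mul_of_nonneg_right ha (pow_nonneg (norm_nonneg q) j)
            linarith
    have h2 : ∏ j ∈ Finset.range n, (1 + R * ‖q‖ ^ j)
        ≤ Real.exp (∑ j ∈ Finset.range n, R * ‖q‖ ^ j) := by
      rw [Real.exp_sum]
      apply Finset.prod_le_prod
      · intro j _
        positivity
      · intro j _
        have := Real.add_one_le_exp (R * ‖q‖ ^ j)
        linarith
    have h3 : ∑ j ∈ Finset.range n, R * ‖q‖ ^ j ≤ R / (1 - ‖q‖) := by
      rw [← Finset.mul_sum, div_eq_mul_inv]
      apply mul_le_mul_of_nonneg_left _ hR0.le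
      have hs := (summable_geometric_of_lt_one (norm_nonneg q) hq1').sum_le_tsum
        (Finset.range n) (fun j _ => pow_nonneg (norm_nonneg q) j)
      rwa [tsum_geometric_of_lt_one (norm_nonneg q) hq1'] at hs
    calc ‖pp n a‖ ≤ _ := h1
      _ ≤ _ := h2
      _ ≤ C := Real.exp_le_exp.2 h3
  set u : ℕ → ℝ := fun n => C * R * ‖q‖ ^ n with hu
  have hsumu : Summable u := ((summable_geometric_of_lt_one (norm_nonneg q)
    hq1').mul_left (C * R))
  have hgb : ∀ (n : ℕ) (a : ℂ), a ∈ closedBall (0:ℂ) R → ‖g n a‖ ≤ u n := by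
    intro n a ha
    rw [mem_closedBall, dist_zero_right] at ha
    rw [hg]
    simp only
    rw [norm_mul, norm_neg, norm_mul, norm_pow]
    calc ‖pp n a‖ * (‖a‖ * ‖q‖ ^ n) ≤ C * (R * ‖q‖ ^ n) := by
          apply mul_le_mul (hppb n a ha)
          · exact mul_le_mul_of_nonneg_right ha (pow_nonneg (norm_nonneg q) n)
          · positivity
          · exact (Real.exp_pos _).le
      _ = u n := by rw [hu]; ring
  have htu : TendstoUniformlyOn (fun (t : Finset ℕ) a => ∑ n ∈ t, g n a)
      (fun a => ∑' n, g n a) atTop (closedBall (0:ℂ) R) :=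
    tendstoUniformlyOn_tsum hsumu hgb
  have hdiffsum : DifferentiableOn ℂ (fun a => ∑' n, g n a) (ball (0:ℂ) R) := by
    apply TendstoLocallyUniformlyOn.differentiableOn
      ((htu.mono ball_subset_closedBall).tendstoLocallyUniformlyOn)
    · apply Filter.Eventually.of_forall
      intro t
      apply DifferentiableOn.fun_sum
      intro n _
      apply Differentiable.differentiableOn
      apply Differentiable.mul
      · apply Differentiable.fun_finsetProd
        intro j _
        exact (differentiable_const _).sub (differentiable_id.mul (differentiable_const _))
      · exact (differentiable_id.mul (differentiable_const _)).neg
    · exact isOpen_ball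
  have hkey : ∀ a : ℂ, ‖a‖ ≤ R → qPochInf q a = 1 + ∑' n, g n a := by
    intro a ha
    have hsg : Summable (fun n => g n a) :=
      Summable.of_norm_bounded hsumu
        (fun n => hgb n a (by simpa [mem_closedBall, dist_zero_right] using ha))
    have htel : ∀ N, ∑ n ∈ Finset.range N, g n a = pp N a - 1 := by
      intro N
      have hstep : ∀ n, g n a = pp (n+1) a - pp n a := by
        intro n; rw [hg, hpp]; simp only
        rw [Finset.prod_range_succ]; ring
      calc ∑ n ∈ Finset.range N, g n a = ∑ n ∈ Finset.range N, (pp (n+1) a - pp n a) :=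
            Finset.sum_congr rfl (fun n _ => hstep n)
        _ = pp N a - pp 0 a := Finset.sum_range_sub (fun n => pp n a) N
        _ = pp N a - 1 := by rw [hpp]; simp
    have h1 : Tendsto (fun N => ∑ n ∈ Finset.range N, g n a) atTop (𝓝 (∑' n, g n a)) :=
      hsg.hasSum.tendsto_sum_nat
    have h2 : Tendsto (fun N => pp N a - 1) atTop (𝓝 (qPochInf q a - 1)) :=
      Tendsto.sub_const ((multipliable_qPochInf hq1 a).hasProd.tendsto_prod_nat) 1
    have h3 := tendsto_nhds_unique (h1.congr (fun N => (htel N))) h2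
    linear_combination -h3
  have heq : Set.EqOn (fun a => 1 + ∑' n, g n a) (qPochInf q) (ball (0:ℂ) R) := by
    intro a ha
    rw [mem_ball, dist_zero_right] at ha
    exact (hkey a ha.le).symm
  have hdOn : DifferentiableOn ℂ (qPochInf q) (ball (0:ℂ) R) :=
    (((differentiableOn_const (1:ℂ)).add hdiffsum).congr heq.symm)
  exact (hdOn.differentiableAt (isOpen_ball.mem_nhds
    (by rw [mem_ball, dist_zero_right, hR]; linarith)))

end q

/-- The master elliptic prototype function. -/
def EE (q c : ℂ) : ℂ → ℂ := fun x => x⁻¹ * qTheta q (x ^ 2) * (qTheta q (c * x) * qTheta q (c / x))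

section q
variable {q : ℂ} (hq1 : ‖q‖ < 1) (hq0 : q ≠ 0)
include hq1 hq0

lemma qTheta_one : qTheta q 1 = 0 := by
  rw [qTheta]
  have : qPochInf q 1 = 0 := qPochInf_eq_zero (q := q) 1 (j := 0) (by simp)
  rw [this, zero_mul]

lemma qTheta_div_q {x : ℂ} (hx : x ≠ 0) : qTheta q (x / q) = -(x / q) * qTheta q x := by
  have hxq : x / q ≠ 0 := div_ne_zero hx hq0
  have h := qTheta_q_mul hq1 hq0 hxq
  rw [show q * (x / q) = x by field_simp] at h
  rw [h]
  field_simp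

lemma qTheta_differentiableAt {x : ℂ} (hx : x ≠ 0) : DifferentiableAt ℂ (qTheta q) x := by
  show DifferentiableAt ℂ (fun x => qPochInf q x * qPochInf q (q / x)) x
  apply DifferentiableAt.mul
  · exact qPochInf_differentiable hq1 x
  · exact ((qPochInf_differentiable hq1) (q / x)).comp x
      ((differentiableAt_const q).div differentiableAt_id hx)

lemma EE_differentiableAt {c x : ℂ} (hx : x ≠ 0) : DifferentiableAt ℂ (EE q c) x := by
  apply DifferentiableAt.mul
  · apply DifferentiableAt.mul
    · exact differentiableAt_inv hx
    · exact (qTheta_differentiableAt hq1 hq0 (pow_ne_zero 2 hx)).comp x (differentiableAt_pow 2)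
  · apply DifferentiableAt.mul
    · rcases eq_or_ne c 0 with rfl | hc
      · simpa using differentiableAt_const (qTheta q 0)
      · exact (qTheta_differentiableAt hq1 hq0 (mul_ne_zero hc hx)).comp x
          ((differentiableAt_const c).mul differentiableAt_id)
    · rcases eq_or_ne c 0 with rfl | hc
      · simp only [zero_div]
        exact differentiableAt_const (qTheta q 0)
      · exact (qTheta_differentiableAt hq1 hq0 (div_ne_zero hc hx)).comp x
          ((differentiableAt_const c).div differentiableAt_id hx)

lemma EE_qmul {c x : ℂ} (hc : c ≠ 0) (hx : x ≠ 0) :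
    q ^ 3 * x ^ 6 * EE q c (q * x) = EE q c x := by
  have hx2 : x ^ 2 ≠ 0 := pow_ne_zero 2 hx
  have hqx2 : q * x ^ 2 ≠ 0 := mul_ne_zero hq0 hx2
  have hcx : c * x ≠ 0 := mul_ne_zero hc hx
  have hcdx : c / x ≠ 0 := div_ne_zero hc hx
  have hA1 : qTheta q ((q * x) ^ 2) = -(q * x ^ 2)⁻¹ * qTheta q (q * x ^ 2) := by
    rw [show (q * x) ^ 2 = q * (q * x ^ 2) by ring, qTheta_q_mul hq1 hq0 hqx2]
  have hA2 : qTheta q (q * x ^ 2) = -(x ^ 2)⁻¹ * qTheta q (x ^ 2) :=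
    qTheta_q_mul hq1 hq0 hx2
  have hB : qTheta q (c * (q * x)) = -(c * x)⁻¹ * qTheta q (c * x) := by
    rw [show c * (q * x) = q * (c * x) by ring, qTheta_q_mul hq1 hq0 hcx]
  have hC : qTheta q (c / (q * x)) = -(c / x / q) * qTheta q (c / x) := by
    rw [show c / (q * x) = (c / x) / q by ring]
    exact qTheta_div_q hq1 hq0 hcdx
  rw [EE, EE, hA1, hA2, hB, hC]
  field_simp

lemma EE_inv {c x : ℂ} (hc : c ≠ 0) (hx : x ≠ 0) : EE q c x⁻¹ = -EE q c x := by
  have hx2 : x ^ 2 ≠ 0 := pow_ne_zero 2 hx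
  have hA : qTheta q ((x⁻¹) ^ 2) = -(x ^ 2)⁻¹ * qTheta q (x ^ 2) := by
    rw [show (x⁻¹) ^ 2 = (x ^ 2)⁻¹ by rw [inv_pow], qTheta_inv hq1 hq0 hx2]
  have hB : c * x⁻¹ = c / x := (div_eq_mul_inv c x).symm
  have hC : c / x⁻¹ = c * x := by field_simp
  rw [EE, EE, hA, hB, hC, inv_inv]
  field_simp

lemma EE_zero_iff {c x : ℂ} (hc : c ≠ 0) (hx : x ≠ 0) :
    EE q c x = 0 ↔ IsQPow q (x ^ 2) ∨ IsQPow q (c * x) ∨ IsQPow q (c / x) := by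
  rw [EE]
  simp only [mul_eq_zero, inv_eq_zero]
  rw [qTheta_eq_zero_iff hq1 hq0 (pow_ne_zero 2 hx),
    qTheta_eq_zero_iff hq1 hq0 (mul_ne_zero hc hx),
    qTheta_eq_zero_iff hq1 hq0 (div_ne_zero hc hx)]
  constructor
  · rintro ((h | h) | h)
    · exact absurd h hx
    · exact Or.inl h
    · exact Or.inr h
  · rintro (h | h)
    · exact Or.inl (Or.inr h)
    · exact Or.inr h

lemma qTheta_q_zero : qTheta q q = 0 :=
  (qTheta_eq_zero_iff hq1 hq0 hq0).2 ⟨1, (zpow_one q).symm⟩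

lemma deriv_qTheta_one_ne : deriv (qTheta q) 1 ≠ 0 := by
  have hfe : qTheta q = fun x => (1 - x) * (qPochInf q (q * x) * qPochInf q (q / x)) := by
    funext x; rw [qTheta, qPochInf_shift hq1 x]; ring
  have hu : DifferentiableAt ℂ (fun x : ℂ => qPochInf q (q * x) * qPochInf q (q / x)) 1 := by
    apply DifferentiableAt.mul
    · exact ((qPochInf_differentiable hq1) _).comp 1 ((differentiableAt_const q).mul differentiableAt_id)
    · exact ((qPochInf_differentiable hq1) _).comp 1 ((differentiableAt_const q).div differentiableAt_id one_ne_zero)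
  have h1 : HasDerivAt (fun x : ℂ => 1 - x) (-1) 1 := by
    simpa using (hasDerivAt_id (1:ℂ)).const_sub 1
  have hd := (h1.fun_mul hu.hasDerivAt).deriv
  rw [hfe]
  rw [hd]
  have hne : qPochInf q (q * 1) * qPochInf q (q / 1) ≠ 0 := by
    rw [mul_one, div_one]
    exact mul_ne_zero (qPochInf_q_ne_zero hq1) (qPochInf_q_ne_zero hq1)
  simpa using hne

lemma deriv_qTheta_q_ne : deriv (qTheta q) q ≠ 0 := by
  have hee : (fun x : ℂ => qTheta q (q * x)) =ᶠ[𝓝 (1:ℂ)] (fun x => -x⁻¹ * qTheta q x) := by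
    filter_upwards [isOpen_compl_singleton.mem_nhds
      (show (1:ℂ) ∈ ({(0:ℂ)}ᶜ : Set ℂ) by simp)] with y hy
    exact qTheta_q_mul hq1 hq0 hy
  have hf : HasDerivAt (fun x : ℂ => q * x) q 1 := by
    simpa using (hasDerivAt_id (1:ℂ)).const_mul q
  have hθq : HasDerivAt (qTheta q) (deriv (qTheta q) q) (q * 1) := by
    rw [mul_one]; exact (qTheta_differentiableAt hq1 hq0 hq0).hasDerivAt
  have hL : HasDerivAt (fun x : ℂ => qTheta q (q * x)) (deriv (qTheta q) q * q) 1 := by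
    have := hθq.comp 1 hf
    simpa [Function.comp_def] using this
  have hinv : HasDerivAt (fun x : ℂ => -x⁻¹) (1 : ℂ) 1 := by
    have := (hasDerivAt_inv (one_ne_zero (α := ℂ))).fun_neg
    simpa using this
  have hR : HasDerivAt (fun x : ℂ => -x⁻¹ * qTheta q x)
      (1 * qTheta q 1 + -1⁻¹ * deriv (qTheta q) 1) 1 :=
    hinv.mul (qTheta_differentiableAt hq1 hq0 one_ne_zero).hasDerivAt
  have heq : deriv (qTheta q) q * q = 1 * qTheta q 1 + -1⁻¹ * deriv (qTheta q) 1 := by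
    rw [← hL.deriv, ← hR.deriv]
    exact hee.deriv_eq
  rw [qTheta_one hq1 hq0] at heq
  intro h
  rw [h, zero_mul] at heq
  apply deriv_qTheta_one_ne hq1 hq0
  have : deriv (qTheta q) 1 = 0 := by
    field_simp at heq
    linear_combination heq
  exact this

lemma not_qpow_sq_aux {c : ℂ} (hcc : ¬ IsQPow q (c ^ 2)) (k : ℤ) (b : ℂ)
    (hb : b ^ 2 = c ^ 2 * q ^ k) : ¬ IsQPow q b := by
  rintro ⟨n, rfl⟩
  apply hcc
  refine ⟨2 * n - k, ?_⟩
  have h1 : ((q : ℂ) ^ n) ^ 2 = q ^ (2 * n) := by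
    rw [← zpow_natCast ((q:ℂ)^n) 2, ← zpow_mul]; ring_nf
  have hqk : (q : ℂ) ^ k ≠ 0 := zpow_ne_zero k hq0
  have : c ^ 2 = q ^ (2 * n) / q ^ k := by
    rw [← h1, hb]; field_simp
  rw [this, ← zpow_sub₀ hq0]

lemma EE_hasDerivAt {c p : ℂ} (hc : c ≠ 0) (hp : p ≠ 0) :
    HasDerivAt (EE q c)
      ((-(p^2)⁻¹ * qTheta q (p^2) + p⁻¹ * (deriv (qTheta q) (p^2) * (2*p)))
          * (qTheta q (c*p) * qTheta q (c/p))
        + (p⁻¹ * qTheta q (p^2)) * ((deriv (qTheta q) (c*p) * c) * qTheta q (c/p)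
            + qTheta q (c*p) * (deriv (qTheta q) (c/p) * (c * -(p^2)⁻¹)))) p := by
  have h1 : HasDerivAt (fun x : ℂ => x⁻¹) (-(p^2)⁻¹) p := hasDerivAt_inv hp
  have h2 : HasDerivAt (fun x : ℂ => qTheta q (x^2)) (deriv (qTheta q) (p^2) * (2*p)) p := by
    have := ((qTheta_differentiableAt hq1 hq0 (pow_ne_zero 2 hp)).hasDerivAt).comp p
      (hasDerivAt_pow 2 p)
    simpa [Function.comp_def] using this
  have h3 : HasDerivAt (fun x : ℂ => qTheta q (c*x)) (deriv (qTheta q) (c*p) * c) p := by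
    have hf : HasDerivAt (fun x : ℂ => c * x) c p := by simpa using (hasDerivAt_id p).const_mul c
    have := ((qTheta_differentiableAt hq1 hq0 (mul_ne_zero hc hp)).hasDerivAt).comp p hf
    simpa [Function.comp_def] using this
  have h4 : HasDerivAt (fun x : ℂ => qTheta q (c/x)) (deriv (qTheta q) (c/p) * (c * -(p^2)⁻¹)) p := by
    have hf : HasDerivAt (fun x : ℂ => c / x) (c * -(p^2)⁻¹) p := by
      simpa [div_eq_mul_inv] using (hasDerivAt_inv hp).const_mul c
    have := ((qTheta_differentiableAt hq1 hq0 (div_ne_zero hc hp)).hasDerivAt).comp p hf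
    simpa [Function.comp_def] using this
  exact (h1.mul h2).mul (h3.mul h4)

lemma EE_base_sq {c p : ℂ} (hc : c ≠ 0) (hp : p ≠ 0) (h0 : qTheta q (p^2) = 0)
    (hd : deriv (qTheta q) (p^2) ≠ 0) (h3 : qTheta q (c*p) ≠ 0) (h4 : qTheta q (c/p) ≠ 0) :
    EE q c p = 0 ∧ deriv (EE q c) p ≠ 0 := by
  constructor
  · rw [EE]; simp [h0]
  · rw [(EE_hasDerivAt hq1 hq0 hc hp).deriv, h0]
    have : (-(p^2)⁻¹ * 0 + p⁻¹ * (deriv (qTheta q) (p^2) * (2*p)))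
          * (qTheta q (c*p) * qTheta q (c/p))
        + (p⁻¹ * 0) * ((deriv (qTheta q) (c*p) * c) * qTheta q (c/p)
            + qTheta q (c*p) * (deriv (qTheta q) (c/p) * (c * -(p^2)⁻¹)))
        = 2 * (deriv (qTheta q) (p^2) * (qTheta q (c*p) * qTheta q (c/p))) := by
      field_simp
      ring
    rw [this]
    exact mul_ne_zero two_ne_zero (mul_ne_zero hd (mul_ne_zero h3 h4))

lemma EE_base_c {c : ℂ} (hc : c ≠ 0) (h2 : qTheta q (c^2) ≠ 0) :
    EE q c c = 0 ∧ deriv (EE q c) c ≠ 0 := by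
  have hcc : c * c = c ^ 2 := by ring
  have hdivc : c / c = 1 := div_self hc
  constructor
  · rw [EE, hdivc, qTheta_one hq1 hq0]; ring
  · rw [(EE_hasDerivAt hq1 hq0 hc hc).deriv, hdivc, hcc, qTheta_one hq1 hq0]
    have : (-(c^2)⁻¹ * qTheta q (c^2) + c⁻¹ * (deriv (qTheta q) (c^2) * (2*c)))
          * (qTheta q (c^2) * 0)
        + (c⁻¹ * qTheta q (c^2)) * ((deriv (qTheta q) (c^2) * c) * 0
            + qTheta q (c^2) * (deriv (qTheta q) 1 * (c * -(c^2)⁻¹)))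
        = -((c^2)⁻¹ * c * c⁻¹) * (qTheta q (c^2) * qTheta q (c^2) * deriv (qTheta q) 1) := by
      ring
    rw [this]
    apply mul_ne_zero
    · simp only [neg_ne_zero]
      exact mul_ne_zero (mul_ne_zero (inv_ne_zero (pow_ne_zero 2 hc)) hc) (inv_ne_zero hc)
    · exact mul_ne_zero (mul_ne_zero h2 h2) (deriv_qTheta_one_ne hq1 hq0)


lemma EE_shift_zero_iff {c p : ℂ} (hc : c ≠ 0) (hp : p ≠ 0) :
    EE q c (q * p) = 0 ↔ EE q c p = 0 := by
  have h := EE_qmul hq1 hq0 hc hp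
  constructor
  · intro h0; rw [← h, h0]; ring
  · intro h0
    rw [h0] at h
    have hK : (q:ℂ) ^ 3 * p ^ 6 ≠ 0 := mul_ne_zero (pow_ne_zero 3 hq0) (pow_ne_zero 6 hp)
    exact (mul_eq_zero.1 h).resolve_left hK

lemma EE_deriv_shift {c p : ℂ} (hc : c ≠ 0) (hp : p ≠ 0) (h0 : EE q c p = 0) :
    deriv (EE q c) p = q ^ 3 * p ^ 6 * q * deriv (EE q c) (q * p) := by
  have h0' : EE q c (q * p) = 0 := (EE_shift_zero_iff hq1 hq0 hc hp).2 h0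
  have hee : (fun x : ℂ => q ^ 3 * x ^ 6 * EE q c (q * x)) =ᶠ[𝓝 p] EE q c := by
    filter_upwards [isOpen_compl_singleton.mem_nhds
      (show p ∈ ({(0:ℂ)}ᶜ : Set ℂ) by simpa using hp)] with y hy
    exact EE_qmul hq1 hq0 hc hy
  have h6 : HasDerivAt (fun x : ℂ => q ^ 3 * x ^ 6) (q ^ 3 * (6 * p ^ 5)) p := by
    simpa using (hasDerivAt_pow 6 p).const_mul (q ^ 3)
  have hE : HasDerivAt (EE q c) (deriv (EE q c) (q * p)) (q * p) :=
    (EE_differentiableAt hq1 hq0 (mul_ne_zero hq0 hp)).hasDerivAt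
  have hf : HasDerivAt (fun x : ℂ => q * x) q p := by simpa using (hasDerivAt_id p).const_mul q
  have hcomp : HasDerivAt (fun x : ℂ => EE q c (q * x)) (deriv (EE q c) (q * p) * q) p := by
    have := hE.comp p hf; simpa [Function.comp_def] using this
  have hL := (h6.fun_mul hcomp).deriv
  have := hee.deriv_eq
  rw [hL, h0'] at this
  rw [← this]
  ring

lemma EE_deriv_inv {c p : ℂ} (hc : c ≠ 0) (hp : p ≠ 0) :
    deriv (EE q c) p⁻¹ = p ^ 2 * deriv (EE q c) p := by
  have hee : (fun x : ℂ => EE q c x⁻¹) =ᶠ[𝓝 p] (fun x => -EE q c x) := by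
    filter_upwards [isOpen_compl_singleton.mem_nhds
      (show p ∈ ({(0:ℂ)}ᶜ : Set ℂ) by simpa using hp)] with y hy
    exact EE_inv hq1 hq0 hc hy
  have hL : HasDerivAt (fun x : ℂ => EE q c x⁻¹) (deriv (EE q c) p⁻¹ * -(p^2)⁻¹) p := by
    have := ((EE_differentiableAt hq1 hq0 (c := c) (inv_ne_zero hp)).hasDerivAt).comp p (hasDerivAt_inv hp)
    simpa [Function.comp_def] using this
  have hR : HasDerivAt (fun x : ℂ => -EE q c x) (-deriv (EE q c) p) p :=
    ((EE_differentiableAt hq1 hq0 hp).hasDerivAt).neg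
  have heq := hee.deriv_eq
  rw [hL.deriv, hR.deriv] at heq
  have hp2 : ((p:ℂ)^2)⁻¹ ≠ 0 := inv_ne_zero (pow_ne_zero 2 hp)
  field_simp at heq
  rw [one_div] at heq
  linear_combination -heq

/-- transport of "simple zero" along multiplication by integer powers of `q`. -/
lemma EE_S_tower {c b : ℂ} (hc : c ≠ 0) (hb : b ≠ 0)
    (hS : EE q c b = 0 ∧ deriv (EE q c) b ≠ 0) (m : ℤ) :
    EE q c (b * q ^ m) = 0 ∧ deriv (EE q c) (b * q ^ m) ≠ 0 := by
  induction m using Int.induction_on with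
  | zero => simpa using hS
  | succ k ih =>
      have hbk : b * q ^ (k:ℤ) ≠ 0 := mul_ne_zero hb (zpow_ne_zero _ hq0)
      have harg : b * q ^ ((k:ℤ)+1) = q * (b * q ^ (k:ℤ)) := by
        rw [zpow_add₀ hq0, zpow_one]; ring
      constructor
      · rw [harg]; exact (EE_shift_zero_iff hq1 hq0 hc hbk).2 ih.1
      · have hder := EE_deriv_shift hq1 hq0 hc hbk ih.1
        rw [harg]
        intro h
        rw [h, mul_zero] at hder
        exact ih.2 hder
  | pred k ih =>
      have hbk : b * q ^ (-(k:ℤ)-1) ≠ 0 := mul_ne_zero hb (zpow_ne_zero _ hq0)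
      have harg : q * (b * q ^ (-(k:ℤ)-1)) = b * q ^ (-(k:ℤ)) := by
        rw [show (-(k:ℤ)) = (-(k:ℤ)-1) + 1 by ring, zpow_add₀ hq0, zpow_one]; ring
      have h0 : EE q c (b * q ^ (-(k:ℤ)-1)) = 0 := by
        apply (EE_shift_zero_iff hq1 hq0 hc hbk).1
        rw [harg]; exact ih.1
      refine ⟨h0, ?_⟩
      have hder := EE_deriv_shift hq1 hq0 hc hbk h0
      rw [harg] at hder
      intro h
      rw [h] at hder
      have hK : (q:ℂ)^3 * (b * q ^ (-(k:ℤ)-1))^6 * q ≠ 0 := by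
        apply mul_ne_zero (mul_ne_zero (pow_ne_zero 3 hq0) (pow_ne_zero 6 hbk)) hq0
      exact ih.2 ((mul_eq_zero.1 hder.symm).resolve_left hK)

lemma EE_zero_classify {c s x : ℂ} (hs : s ^ 2 = q) (hc : c ≠ 0) (hx : x ≠ 0)
    (h : EE q c x = 0) :
    ∃ (b : ℂ) (m : ℤ), (b = 1 ∨ b = -1 ∨ b = s ∨ b = -s ∨ b = c ∨ b = c⁻¹) ∧ x = b * q ^ m := by
  have hs0 : s ≠ 0 := by
    intro h'; rw [h'] at hs; exact hq0 (by simpa using hs.symm)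
  rcases (EE_zero_iff hq1 hq0 hc hx).1 h with ⟨n, hn⟩ | ⟨n, hn⟩ | ⟨n, hn⟩
  · rcases Int.even_or_odd n with ⟨m, hm⟩ | ⟨m, hm⟩
    · -- x^2 = q^(2m)
      have hqm : (q:ℂ) ^ (m:ℤ) ≠ 0 := zpow_ne_zero _ hq0
      have hsq : (x / q ^ (m:ℤ)) ^ 2 = 1 := by
        rw [div_pow, hn, hm]
        rw [show m + m = 2 * m by ring, ← zpow_natCast ((q:ℂ)^(m:ℤ)) 2, ← zpow_mul]
        rw [show (m:ℤ) * (2:ℕ) = 2 * m by ring]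
        exact div_self (zpow_ne_zero _ hq0)
      have : (x / q ^ (m:ℤ) - 1) * (x / q ^ (m:ℤ) + 1) = 0 := by linear_combination hsq
      rcases mul_eq_zero.1 this with h' | h'
      · exact ⟨1, m, Or.inl rfl, by field_simp at h'; linear_combination h'⟩
      · refine ⟨-1, m, Or.inr (Or.inl rfl), ?_⟩
        field_simp at h'
        linear_combination h'
    · -- x^2 = q^(2m+1) = (s q^m)^2
      have hqm : (q:ℂ) ^ (m:ℤ) ≠ 0 := zpow_ne_zero _ hq0
      have hsq : (x / (s * q ^ (m:ℤ))) ^ 2 = 1 := by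
        rw [div_pow, hn, hm, mul_pow, hs]
        rw [show 2 * m + 1 = 1 + 2 * m by ring, zpow_add₀ hq0, zpow_one]
        rw [← zpow_natCast ((q:ℂ)^(m:ℤ)) 2, ← zpow_mul, show (m:ℤ) * (2:ℕ) = 2 * m by ring]
        exact div_self (mul_ne_zero hq0 (zpow_ne_zero _ hq0))
      have : (x / (s * q ^ (m:ℤ)) - 1) * (x / (s * q ^ (m:ℤ)) + 1) = 0 := by linear_combination hsq
      have hsm : s * (q:ℂ) ^ (m:ℤ) ≠ 0 := mul_ne_zero hs0 hqm
      rcases mul_eq_zero.1 this with h' | h'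
      · refine ⟨s, m, Or.inr (Or.inr (Or.inl rfl)), ?_⟩
        field_simp at h'
        linear_combination h'
      · refine ⟨-s, m, Or.inr (Or.inr (Or.inr (Or.inl rfl))), ?_⟩
        field_simp at h'
        linear_combination h'
  · -- c * x = q^n
    refine ⟨c⁻¹, n, Or.inr (Or.inr (Or.inr (Or.inr (Or.inr rfl)))), ?_⟩
    field_simp
    linear_combination hn
  · -- c / x = q^n
    refine ⟨c, -n, Or.inr (Or.inr (Or.inr (Or.inr (Or.inl rfl)))), ?_⟩
    have hqn : (q:ℂ) ^ (n:ℤ) ≠ 0 := zpow_ne_zero _ hq0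
    field_simp at hn
    rw [zpow_neg, hn]
    field_simp


omit hq1 hq0 in
lemma self_neg_zero {a : ℂ} (h : a = -a) : a = 0 := by
  have h2 : (2:ℂ) * a = 0 := by linear_combination h
  exact (mul_eq_zero.1 h2).resolve_left two_ne_zero

lemma qTheta_ne_zero_of {b : ℂ} (hb : b ≠ 0) (h : ¬ IsQPow q b) : qTheta q b ≠ 0 :=
  fun hh => h ((qTheta_eq_zero_iff hq1 hq0 hb).1 hh)

lemma EE_simple_zeros {c s : ℂ} (hs : s ^ 2 = q) (hc : c ≠ 0) (hcc : ¬ IsQPow q (c ^ 2)) :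
    ∀ p : ℂ, p ≠ 0 → EE q c p = 0 → deriv (EE q c) p ≠ 0 := by
  intro p hp h
  obtain ⟨b, m, hb, rfl⟩ := EE_zero_classify hq1 hq0 hs hc hp h
  have hs0 : s ≠ 0 := by
    intro h'; rw [h'] at hs; exact hq0 (by simpa using hs.symm)
  have hθ1 : qTheta q 1 = 0 := qTheta_one hq1 hq0
  rcases hb with hb|hb|hb|hb|hb|hb <;> subst hb
  · refine (EE_S_tower hq1 hq0 hc one_ne_zero ?_ m).2
    refine EE_base_sq hq1 hq0 hc one_ne_zero ?_ ?_ ?_ ?_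
    · rw [one_pow]; exact hθ1
    · rw [one_pow]; exact deriv_qTheta_one_ne hq1 hq0
    · rw [mul_one]
      exact qTheta_ne_zero_of hq1 hq0 hc
        (not_qpow_sq_aux hq1 hq0 hcc 0 c (by rw [zpow_zero, mul_one]))
    · rw [div_one]
      exact qTheta_ne_zero_of hq1 hq0 hc
        (not_qpow_sq_aux hq1 hq0 hcc 0 c (by rw [zpow_zero, mul_one]))
  · refine (EE_S_tower hq1 hq0 hc (neg_ne_zero.2 one_ne_zero) ?_ m).2
    refine EE_base_sq hq1 hq0 hc (neg_ne_zero.2 one_ne_zero) ?_ ?_ ?_ ?_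
    · rw [show ((-1:ℂ))^2 = 1 by norm_num]; exact hθ1
    · rw [show ((-1:ℂ))^2 = 1 by norm_num]; exact deriv_qTheta_one_ne hq1 hq0
    · rw [mul_neg_one]
      exact qTheta_ne_zero_of hq1 hq0 (neg_ne_zero.2 hc)
        (not_qpow_sq_aux hq1 hq0 hcc 0 (-c) (by rw [zpow_zero, mul_one]; ring))
    · rw [div_neg, div_one]
      exact qTheta_ne_zero_of hq1 hq0 (neg_ne_zero.2 hc)
        (not_qpow_sq_aux hq1 hq0 hcc 0 (-c) (by rw [zpow_zero, mul_one]; ring))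
  · refine (EE_S_tower hq1 hq0 hc hs0 ?_ m).2
    refine EE_base_sq hq1 hq0 hc hs0 ?_ ?_ ?_ ?_
    · rw [hs]; exact qTheta_q_zero hq1 hq0
    · rw [hs]; exact deriv_qTheta_q_ne hq1 hq0
    · exact qTheta_ne_zero_of hq1 hq0 (mul_ne_zero hc hs0)
        (not_qpow_sq_aux hq1 hq0 hcc 1 (c*b) (by rw [mul_pow, hs, zpow_one]))
    · exact qTheta_ne_zero_of hq1 hq0 (div_ne_zero hc hs0)
        (not_qpow_sq_aux hq1 hq0 hcc (-1) (c/b)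
          (by rw [div_pow, hs, zpow_neg, zpow_one, div_eq_mul_inv]))
  · refine (EE_S_tower hq1 hq0 hc (neg_ne_zero.2 hs0) ?_ m).2
    refine EE_base_sq hq1 hq0 hc (neg_ne_zero.2 hs0) ?_ ?_ ?_ ?_
    · rw [neg_sq, hs]; exact qTheta_q_zero hq1 hq0
    · rw [neg_sq, hs]; exact deriv_qTheta_q_ne hq1 hq0
    · exact qTheta_ne_zero_of hq1 hq0 (mul_ne_zero hc (neg_ne_zero.2 hs0))
        (not_qpow_sq_aux hq1 hq0 hcc 1 (c*(-s)) (by rw [mul_pow, neg_sq, hs, zpow_one]))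
    · exact qTheta_ne_zero_of hq1 hq0 (div_ne_zero hc (neg_ne_zero.2 hs0))
        (not_qpow_sq_aux hq1 hq0 hcc (-1) (c/(-s))
          (by rw [div_pow, neg_sq, hs, zpow_neg, zpow_one, div_eq_mul_inv]))
  · refine (EE_S_tower hq1 hq0 hc hc ?_ m).2
    exact EE_base_c hq1 hq0 hc (qTheta_ne_zero_of hq1 hq0 (pow_ne_zero 2 hc) hcc)
  · refine (EE_S_tower hq1 hq0 hc (inv_ne_zero hc) ?_ m).2
    have hSc := EE_base_c hq1 hq0 hc (qTheta_ne_zero_of hq1 hq0 (pow_ne_zero 2 hc) hcc)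
    constructor
    · rw [EE_inv hq1 hq0 hc hc, hSc.1, neg_zero]
    · rw [EE_deriv_inv hq1 hq0 hc hc]
      exact mul_ne_zero (pow_ne_zero 2 hc) hSc.2

lemma g_tower {g : ℂ → ℂ} (hgq : ∀ x : ℂ, x ≠ 0 → q^3 * x^6 * g (q*x) = g x)
    {b : ℂ} (hb : b ≠ 0) (h0 : g b = 0) (m : ℤ) : g (b * q ^ m) = 0 := by
  induction m using Int.induction_on with
  | zero => simpa using h0
  | succ k ih =>
      have hbk : b * q ^ (k:ℤ) ≠ 0 := mul_ne_zero hb (zpow_ne_zero _ hq0)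
      have harg : b * q ^ ((k:ℤ)+1) = q * (b * q ^ (k:ℤ)) := by
        rw [zpow_add₀ hq0, zpow_one]; ring
      have h := hgq _ hbk
      rw [ih] at h
      rw [harg]
      have hK : (q:ℂ)^3 * (b * q ^ (k:ℤ))^6 ≠ 0 :=
        mul_ne_zero (pow_ne_zero 3 hq0) (pow_ne_zero 6 hbk)
      exact (mul_eq_zero.1 h).resolve_left hK
  | pred k ih =>
      have hbk : b * q ^ (-(k:ℤ)-1) ≠ 0 := mul_ne_zero hb (zpow_ne_zero _ hq0)
      have harg : q * (b * q ^ (-(k:ℤ)-1)) = b * q ^ (-(k:ℤ)) := by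
        rw [show (-(k:ℤ)) = (-(k:ℤ)-1) + 1 by ring, zpow_add₀ hq0, zpow_one]; ring
      have h := hgq _ hbk
      rw [harg, ih, mul_zero] at h
      exact h.symm

lemma g_forced_zeros {c s : ℂ} (hs : s ^ 2 = q) (hc : c ≠ 0) {g : ℂ → ℂ}
    (hgq : ∀ x : ℂ, x ≠ 0 → q^3 * x^6 * g (q*x) = g x)
    (hgi : ∀ x : ℂ, x ≠ 0 → g x⁻¹ = -g x)
    (hgc : g c = 0) :
    ∀ p : ℂ, p ≠ 0 → EE q c p = 0 → g p = 0 := by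
  have hs0 : s ≠ 0 := by
    intro h'; rw [h'] at hs; exact hq0 (by simpa using hs.symm)
  have hqs : q * s⁻¹ = s := by
    rw [← hs]; field_simp [pow_two]
  have h6 : (q:ℂ)^3 * (s⁻¹)^6 = 1 := by
    rw [inv_pow, show (s:ℂ)^6 = (s^2)^3 by ring, hs]
    field_simp
  have hgs : g s = 0 := by
    have h := hgq s⁻¹ (inv_ne_zero hs0)
    rw [hqs] at h
    rw [hgi s hs0] at h
    have hss : g s = -g s := by
      calc g s = 1 * g s := (one_mul _).symm
        _ = q^3 * (s⁻¹)^6 * g s := by rw [h6]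
        _ = -g s := h
    exact self_neg_zero hss
  have hgns : g (-s) = 0 := by
    have hns0 : (-s : ℂ) ≠ 0 := neg_ne_zero.2 hs0
    have h := hgq (-s)⁻¹ (inv_ne_zero hns0)
    have harg : q * (-s)⁻¹ = -s := by rw [inv_neg, mul_neg, hqs]
    rw [harg, hgi (-s) hns0] at h
    have h6' : (q:ℂ)^3 * ((-s)⁻¹)^6 = 1 := by
      rw [inv_neg, Even.neg_pow (⟨3, by norm_num⟩ : Even 6)]
      exact h6
    have hss : g (-s) = -g (-s) := by
      calc g (-s) = 1 * g (-s) := (one_mul _).symm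
        _ = q^3 * ((-s)⁻¹)^6 * g (-s) := by rw [h6']
        _ = -g (-s) := h
    exact self_neg_zero hss
  intro p hp h
  obtain ⟨b, m, hb, rfl⟩ := EE_zero_classify hq1 hq0 hs hc hp h
  rcases hb with hb|hb|hb|hb|hb|hb <;> subst hb
  · refine g_tower hq1 hq0 hgq one_ne_zero ?_ m
    have h1 := hgi 1 one_ne_zero
    rw [inv_one] at h1
    exact self_neg_zero h1
  · refine g_tower hq1 hq0 hgq (neg_ne_zero.2 one_ne_zero) ?_ m
    have h1 := hgi (-1) (neg_ne_zero.2 one_ne_zero)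
    rw [show ((-1:ℂ))⁻¹ = -1 by norm_num] at h1
    exact self_neg_zero h1
  · exact g_tower hq1 hq0 hgq hs0 hgs m
  · exact g_tower hq1 hq0 hgq (neg_ne_zero.2 hs0) hgns m
  · exact g_tower hq1 hq0 hgq hc hgc m
  · refine g_tower hq1 hq0 hgq (inv_ne_zero hc) ?_ m
    rw [hgi c hc, hgc, neg_zero]

end q

section q
variable {q : ℂ} (hq1 : ‖q‖ < 1) (hq0 : q ≠ 0)
include hq1 hq0

theorem elliptic_vanishing {c s : ℂ} (hs : s ^ 2 = q) (hc : c ≠ 0)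
    (hcc : ¬ IsQPow q (c ^ 2)) {g : ℂ → ℂ}
    (hgd : ∀ x : ℂ, x ≠ 0 → DifferentiableAt ℂ g x)
    (hgq : ∀ x : ℂ, x ≠ 0 → q^3 * x^6 * g (q*x) = g x)
    (hgi : ∀ x : ℂ, x ≠ 0 → g x⁻¹ = -g x)
    (hgc : g c = 0)
    {w : ℂ} (hw : w ≠ 0) (hEw : EE q c w ≠ 0) (hgw : g w = 0) :
    ∀ x : ℂ, x ≠ 0 → g x = 0 := by
  set D : ℂ → ℂ := EE q c with hD
  have hDd : ∀ x : ℂ, x ≠ 0 → DifferentiableAt ℂ D x :=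
    fun x hx => EE_differentiableAt hq1 hq0 hx
  have hDz : ∀ p : ℂ, p ≠ 0 → D p = 0 → g p = 0 :=
    g_forced_zeros hq1 hq0 hs hc hgq hgi hgc
  have hDs : ∀ p : ℂ, p ≠ 0 → D p = 0 → deriv D p ≠ 0 :=
    EE_simple_zeros hq1 hq0 hs hc hcc
  haveI : ∀ p : ℂ, (𝓝[≠] p).NeBot := fun p => NormedField.nhdsNE_neBot p
  -- eventually facts
  have hne : ∀ p : ℂ, p ≠ 0 → ∀ᶠ z in 𝓝[≠] p, z ≠ 0 := by
    intro p hp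
    exact eventually_nhdsWithin_of_eventually_nhds
      (isOpen_compl_singleton.eventually_mem (by simpa using hp))
  -- Step 1 : zeros of D are isolated
  have hiso : ∀ p : ℂ, p ≠ 0 → D p = 0 → ∀ᶠ z in 𝓝[≠] p, D z ≠ 0 := by
    intro p hp h0
    have hd := (hDd p hp).hasDerivAt
    have hslope := hasDerivAt_iff_tendsto_slope.1 hd
    have hev : ∀ᶠ z in 𝓝[≠] p, slope D p z ≠ 0 := hslope.eventually_ne (hDs p hp h0)
    filter_upwards [hev, self_mem_nhdsWithin] with z hz1 hz2
    intro hDz0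
    apply hz1
    rw [slope_def_field, hDz0, h0]
    simp
  -- Step 2 : limits of g / D
  set Hfun : ℂ → ℂ := fun p => if D p = 0 then deriv g p / deriv D p else g p / D p with hHfun
  have hHlim : ∀ p : ℂ, p ≠ 0 → Tendsto (fun z => g z / D z) (𝓝[≠] p) (𝓝 (Hfun p)) := by
    intro p hp
    by_cases h0 : D p = 0
    · have hgp : g p = 0 := hDz p hp h0
      have h1 : Tendsto (slope g p) (𝓝[≠] p) (𝓝 (deriv g p)) :=
        hasDerivAt_iff_tendsto_slope.1 (hgd p hp).hasDerivAt
      have h2 : Tendsto (slope D p) (𝓝[≠] p) (𝓝 (deriv D p)) :=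
        hasDerivAt_iff_tendsto_slope.1 (hDd p hp).hasDerivAt
      have h3 : Tendsto (fun z => slope g p z / slope D p z) (𝓝[≠] p)
          (𝓝 (deriv g p / deriv D p)) := h1.div h2 (hDs p hp h0)
      have h4 : (fun z => slope g p z / slope D p z) =ᶠ[𝓝[≠] p] (fun z => g z / D z) := by
        filter_upwards [self_mem_nhdsWithin] with z hz
        have hzp : z - p ≠ 0 := sub_ne_zero.2 hz
        rw [slope_def_field, slope_def_field, hgp, h0, sub_zero, sub_zero]
        rcases eq_or_ne (D z) 0 with hDz0 | hDz0
        · simp [hDz0]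
        · field_simp
      have hval : Hfun p = deriv g p / deriv D p := by
        show (if D p = 0 then deriv g p / deriv D p else g p / D p) = _
        rw [if_pos h0]
      rw [hval]
      exact h3.congr' h4
    · have hcont : ContinuousAt (fun z => g z / D z) p :=
        ((hgd p hp).continuousAt).div ((hDd p hp).continuousAt) h0
      have hval : Hfun p = g p / D p := by
        show (if D p = 0 then deriv g p / deriv D p else g p / D p) = _
        rw [if_neg h0]
      rw [hval]
      exact hcont.tendsto.mono_left nhdsWithin_le_nhds
  -- H agrees with g / D away from zeros
  have hHeq : ∀ z : ℂ, D z ≠ 0 → Hfun z = g z / D z := by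
    intro z h0
    show (if D z = 0 then deriv g z / deriv D z else g z / D z) = _
    rw [if_neg h0]
  -- Step 3 : H is differentiable on ℂ \ {0}
  have hUopen : IsOpen {x : ℂ | x ≠ 0 ∧ D x ≠ 0} := by
    rw [isOpen_iff_mem_nhds]
    rintro x ⟨hx0, hxD⟩
    have h1 : {y : ℂ | y ≠ 0} ∈ 𝓝 x := isOpen_compl_singleton.mem_nhds (by simpa using hx0)
    have h2 : {y : ℂ | D y ≠ 0} ∈ 𝓝 x := (hDd x hx0).continuousAt.eventually_ne hxD
    filter_upwards [h1, h2] with y hy1 hy2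
    exact ⟨hy1, hy2⟩
  have hHdiff1 : ∀ z : ℂ, z ≠ 0 → D z ≠ 0 → DifferentiableAt ℂ Hfun z := by
    intro z hz h0
    have hU : {x : ℂ | x ≠ 0 ∧ D x ≠ 0} ∈ 𝓝 z := hUopen.mem_nhds ⟨hz, h0⟩
    have heq : Hfun =ᶠ[𝓝 z] fun y => g y / D y := by
      filter_upwards [hU] with y hy
      exact hHeq y hy.2
    rw [heq.differentiableAt_iff]
    exact ((hgd z hz).div (hDd z hz) h0)
  have hHdiff : ∀ p : ℂ, p ≠ 0 → DifferentiableAt ℂ Hfun p := by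
    intro p hp
    by_cases h0 : D p = 0
    · -- removable singularity
      have hd : ∀ᶠ z in 𝓝[≠] p, DifferentiableAt ℂ Hfun z := by
        filter_upwards [hne p hp, hiso p hp h0] with z hz1 hz2
        exact hHdiff1 z hz1 hz2
      have hct : ContinuousAt Hfun p := by
        rw [ContinuousAt, ← nhdsNE_sup_pure p, tendsto_sup]
        constructor
        · have heq : (fun z => g z / D z) =ᶠ[𝓝[≠] p] Hfun := by
            filter_upwards [hiso p hp h0] with z hz
            exact (hHeq z hz).symm
          exact (hHlim p hp).congr' heq
        · exact tendsto_pure_nhds Hfun p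
      exact (Complex.analyticAt_of_differentiable_on_punctured_nhds_of_continuousAt
        hd hct).differentiableAt
    · exact hHdiff1 p hp h0
  -- Step 4 : boundedness
  have hq0' : (0:ℝ) < ‖q‖ := norm_pos_iff.2 hq0
  have hqlt : ‖q‖ < 1 := hq1
  set A : Set ℂ := closedBall (0:ℂ) 1 ∩ {x : ℂ | ‖q‖ ≤ ‖x‖} with hA
  have hAsub : ∀ x ∈ A, x ≠ 0 := by
    rintro x ⟨-, hx2⟩ rfl
    simp only [mem_setOf_eq, norm_zero] at hx2
    linarith
  have hAcomp : IsCompact A := (isCompact_closedBall (0:ℂ) 1).inter_right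
    (isClosed_le continuous_const continuous_norm)
  have hAcont : ContinuousOn Hfun A :=
    fun x hx => ((hHdiff x (hAsub x hx)).continuousAt).continuousWithinAt
  obtain ⟨M, hM⟩ := hAcomp.exists_bound_of_continuousOn hAcont
  have hshift : ∀ x : ℂ, x ≠ 0 → D x ≠ 0 → (D (q*x) ≠ 0 ∧ Hfun (q*x) = Hfun x) := by
    intro x hx h0
    have hD1 : D (q*x) ≠ 0 := fun hcon => h0 ((EE_shift_zero_iff hq1 hq0 hc hx).1 hcon)
    refine ⟨hD1, ?_⟩
    rw [hHeq _ hD1, hHeq _ h0]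
    have hgx := hgq x hx
    have hDx := EE_qmul hq1 hq0 hc hx
    have hK : (q:ℂ)^3 * x^6 ≠ 0 := mul_ne_zero (pow_ne_zero 3 hq0) (pow_ne_zero 6 hx)
    rw [← hgx, hD, ← hDx, mul_div_mul_left _ _ hK]
  have hper : ∀ x : ℂ, x ≠ 0 → D x ≠ 0 → ∀ m : ℤ,
      (D (x * q^m) ≠ 0 ∧ Hfun (x * q^m) = Hfun x) := by
    intro x hx h0 m
    induction m using Int.induction_on with
    | zero =>
        rw [zpow_zero, mul_one]
        exact ⟨h0, rfl⟩
    | succ k ih =>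
        have hxk : x * q^(k:ℤ) ≠ 0 := mul_ne_zero hx (zpow_ne_zero _ hq0)
        have hstep := hshift _ hxk ih.1
        have harg : x * q^((k:ℤ)+1) = q * (x * q^(k:ℤ)) := by
          rw [zpow_add₀ hq0, zpow_one]; ring
        rw [harg]
        exact ⟨hstep.1, hstep.2.trans ih.2⟩
    | pred k ih =>
        have hxk1 : x * q^(-(k:ℤ)-1) ≠ 0 := mul_ne_zero hx (zpow_ne_zero _ hq0)
        have harg : q * (x * q^(-(k:ℤ)-1)) = x * q^(-(k:ℤ)) := by
          rw [show (-(k:ℤ)) = (-(k:ℤ)-1) + 1 by ring, zpow_add₀ hq0, zpow_one]; ring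
        have hD1 : D (x * q^(-(k:ℤ)-1)) ≠ 0 := by
          intro hcon
          apply ih.1
          rw [← harg]
          exact (EE_shift_zero_iff hq1 hq0 hc hxk1).2 hcon
        have hstep := hshift _ hxk1 hD1
        rw [harg] at hstep
        exact ⟨hD1, hstep.2.symm.trans ih.2⟩
  have hgood : ∀ x : ℂ, x ≠ 0 → D x ≠ 0 → ‖Hfun x‖ ≤ M := by
    intro x hx h0
    have hx0 : (0:ℝ) < ‖x‖ := norm_pos_iff.2 hx
    obtain ⟨n, hn⟩ := exists_mem_Ioc_zpow hx0 (one_lt_inv_iff₀.2 ⟨hq0', hqlt⟩)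
    have hrn : ∀ k : ℤ, (‖q‖⁻¹) ^ k = (‖q‖ : ℝ) ^ (-k) := by
      intro k; exact inv_zpow' _ _
    have hmem : x * q ^ (n+1) ∈ A := by
      have hnorm : ‖x * q ^ (n+1)‖ = ‖x‖ * ‖q‖ ^ (n+1) := by
        rw [norm_mul, norm_zpow]
      constructor
      · rw [mem_closedBall, dist_zero_right, hnorm]
        have h2 := hn.2
        rw [hrn (n+1)] at h2
        calc ‖x‖ * ‖q‖ ^ (n+1) ≤ ‖q‖ ^ (-(n+1)) * ‖q‖ ^ (n+1) :=
              mul_le_mul_of_nonneg_right h2 (zpow_nonneg (norm_nonneg q) _)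
          _ = 1 := by rw [← zpow_add₀ (ne_of_gt hq0'), show (-(n+1)) + (n+1) = (0:ℤ) by ring, zpow_zero]
      · rw [mem_setOf_eq, hnorm]
        have h1 := hn.1
        rw [hrn n] at h1
        have := mul_lt_mul_of_pos_right h1 (zpow_pos hq0' (n+1))
        calc ‖q‖ = ‖q‖ ^ (-n) * ‖q‖ ^ (n+1) := by
              rw [← zpow_add₀ (ne_of_gt hq0'), show (-n) + (n+1) = (1:ℤ) by ring, zpow_one]
          _ ≤ ‖x‖ * ‖q‖ ^ (n+1) := le_of_lt this
    have := (hper x hx h0 (n+1)).2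
    rw [← this]
    exact hM _ hmem
  have hbound : ∀ x : ℂ, x ≠ 0 → ‖Hfun x‖ ≤ M := by
    intro x hx
    by_cases h0 : D x = 0
    · have ht : Tendsto Hfun (𝓝[≠] x) (𝓝 (Hfun x)) :=
        ((hHdiff x hx).continuousAt.tendsto).mono_left nhdsWithin_le_nhds
      have hev : ∀ᶠ z in 𝓝[≠] x, ‖Hfun z‖ ≤ M := by
        filter_upwards [hne x hx, hiso x hx h0] with z h1 h2
        exact hgood z h1 h2
      exact le_of_tendsto ht.norm hev
    · exact hgood x hx h0
  -- Step 5 : extension over 0, Liouville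
  set H0 : ℂ → ℂ := Function.update Hfun 0 (limUnder (𝓝[≠] 0) Hfun) with hH0
  have hball : DifferentiableOn ℂ Hfun (ball (0:ℂ) 1 \ {0}) := by
    intro z hz
    exact (hHdiff z (by simpa using hz.2)).differentiableWithinAt
  have hbdd : BddAbove (norm ∘ Hfun '' (ball (0:ℂ) 1 \ {0})) := by
    refine ⟨M, ?_⟩
    rintro y ⟨z, hz, rfl⟩
    exact hbound z (by simpa using hz.2)
  have hH0diffball : DifferentiableOn ℂ H0 (ball (0:ℂ) 1) :=
    Complex.differentiableOn_update_limUnder_of_bddAbove (ball_mem_nhds _ one_pos) hball hbdd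
  have hH0diff : Differentiable ℂ H0 := by
    intro z
    rcases eq_or_ne z 0 with rfl | hz
    · exact hH0diffball.differentiableAt (isOpen_ball.mem_nhds (by simp))
    · have heq : Hfun =ᶠ[𝓝 z] H0 := by
        filter_upwards [isOpen_compl_singleton.mem_nhds (by simpa using hz)] with y hy
        rw [hH0, Function.update_of_ne (by simpa using hy)]
      exact (hHdiff z hz).congr_of_eventuallyEq heq.symm
  have hH0bound : ∀ z : ℂ, ‖H0 z‖ ≤ max M ‖H0 0‖ := by
    intro z
    rcases eq_or_ne z 0 with rfl | hz
    · exact le_max_right _ _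
    · rw [hH0, Function.update_of_ne hz]
      exact (hbound z hz).trans (le_max_left _ _)
  have hconst : ∀ z : ℂ, H0 z = H0 w := by
    intro z
    apply hH0diff.apply_eq_apply_of_bounded
    rw [isBounded_iff_forall_norm_le]
    exact ⟨max M ‖H0 0‖, by rintro y ⟨z', rfl⟩; exact hH0bound z'⟩
  have hH0w : H0 w = 0 := by
    rw [hH0, Function.update_of_ne hw, hHeq w hEw, hgw, zero_div]
  have hgood0 : ∀ z : ℂ, z ≠ 0 → D z ≠ 0 → g z = 0 := by
    intro z hz h0
    have h1 : Hfun z = 0 := by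
      have h2 := hconst z
      rw [hH0w, hH0, Function.update_of_ne hz] at h2
      exact h2
    rw [hHeq z h0] at h1
    exact (div_eq_zero_iff.1 h1).resolve_right h0
  intro x hx
  by_cases h0 : D x = 0
  · have ht : Tendsto g (𝓝[≠] x) (𝓝 (g x)) :=
      ((hgd x hx).continuousAt.tendsto).mono_left nhdsWithin_le_nhds
    have hev : g =ᶠ[𝓝[≠] x] (fun _ => (0:ℂ)) := by
      filter_upwards [hne x hx, hiso x hx h0] with z h1 h2
      exact hgood0 z h1 h2
    exact tendsto_nhds_unique (ht.congr' hev) tendsto_const_nhds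
  · exact hgood0 x hx h0
end q

/-- Interpolation lemma (Lemma 3.9): a function analytic on `ℂ \ {0}` with the
elliptic-type transformation behaviour is determined by two generic values. -/
theorem elliptic_interpolation_lemma
    (q : ℂ) (hq0 : q ≠ 0) (hq1 : ‖q‖ < 1)
    (f : ℂ → ℂ) (hf : ∀ x : ℂ, x ≠ 0 → AnalyticAt ℂ f x)
    (hqp : ∀ x : ℂ, x ≠ 0 → f (q * x) = f x / (q ^ 3 * x ^ 6))
    (hinv : ∀ x : ℂ, x ≠ 0 → f x⁻¹ = -f x)
    (c1 c2 : ℂ) (hc1 : c1 ≠ 0) (hc2 : c2 ≠ 0)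
    (h1 : ¬ IsQPow q (c1 ^ 2)) (h2 : ¬ IsQPow q (c2 ^ 2))
    (h3 : ¬ IsQPow q (c1 * c2)) (h4 : ¬ IsQPow q (c1 / c2)) :
    ∀ x : ℂ, x ≠ 0 →
      f x = x⁻¹ * qTheta q (x ^ 2) *
        (c1 * qTheta q (c2 * x) * qTheta q (c2 / x) * f c1 /
            (qTheta q (c1 ^ 2) * qTheta q (c2 * c1) * qTheta q (c2 / c1)) +
          c2 * qTheta q (c1 * x) * qTheta q (c1 / x) * f c2 /
            (qTheta q (c2 ^ 2) * qTheta q (c1 * c2) * qTheta q (c1 / c2))) := by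
  -- a square root of q
  set s : ℂ := Complex.exp (Complex.log q / 2) with hsdef
  have hs : s ^ 2 = q := by
    rw [hsdef, sq, ← Complex.exp_add, add_halves]
    exact Complex.exp_log hq0
  -- nonvanishing thetas
  have h3' : ¬ IsQPow q (c2 * c1) := by rw [mul_comm]; exact h3
  have h4' : ¬ IsQPow q (c2 / c1) := by
    rintro ⟨n, hn⟩
    exact h4 ⟨-n, by rw [zpow_neg, ← hn, inv_div]⟩
  have hθ1 : qTheta q (c1 ^ 2) ≠ 0 := qTheta_ne_zero_of hq1 hq0 (pow_ne_zero 2 hc1) h1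
  have hθ2 : qTheta q (c2 ^ 2) ≠ 0 := qTheta_ne_zero_of hq1 hq0 (pow_ne_zero 2 hc2) h2
  have hθ3 : qTheta q (c1 * c2) ≠ 0 := qTheta_ne_zero_of hq1 hq0 (mul_ne_zero hc1 hc2) h3
  have hθ3' : qTheta q (c2 * c1) ≠ 0 := qTheta_ne_zero_of hq1 hq0 (mul_ne_zero hc2 hc1) h3'
  have hθ4 : qTheta q (c1 / c2) ≠ 0 := qTheta_ne_zero_of hq1 hq0 (div_ne_zero hc1 hc2) h4
  have hθ4' : qTheta q (c2 / c1) ≠ 0 := qTheta_ne_zero_of hq1 hq0 (div_ne_zero hc2 hc1) h4'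
  set K1 : ℂ := c1 * f c1 / (qTheta q (c1^2) * qTheta q (c2*c1) * qTheta q (c2/c1)) with hK1
  set K2 : ℂ := c2 * f c2 / (qTheta q (c2^2) * qTheta q (c1*c2) * qTheta q (c1/c2)) with hK2
  set g : ℂ → ℂ := fun x => f x - (K1 * EE q c2 x + K2 * EE q c1 x) with hgdef
  have hgd : ∀ x : ℂ, x ≠ 0 → DifferentiableAt ℂ g x := by
    intro x hx
    exact ((hf x hx).differentiableAt).sub
      (((EE_differentiableAt hq1 hq0 hx).const_mul K1).add
        ((EE_differentiableAt hq1 hq0 hx).const_mul K2))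
  have hgq : ∀ x : ℂ, x ≠ 0 → q^3 * x^6 * g (q*x) = g x := by
    intro x hx
    have hK : (q:ℂ)^3 * x^6 ≠ 0 := mul_ne_zero (pow_ne_zero 3 hq0) (pow_ne_zero 6 hx)
    rw [hgdef]
    simp only
    rw [hqp x hx, ← EE_qmul hq1 hq0 hc2 hx, ← EE_qmul hq1 hq0 hc1 hx]
    field_simp
  have hgi : ∀ x : ℂ, x ≠ 0 → g x⁻¹ = -g x := by
    intro x hx
    rw [hgdef]
    simp only
    rw [hinv x hx, EE_inv hq1 hq0 hc2 hx, EE_inv hq1 hq0 hc1 hx]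
    ring
  have hEcc : ∀ c : ℂ, c ≠ 0 → EE q c c = 0 := by
    intro c hc
    rw [EE, div_self hc, qTheta_one hq1 hq0]
    ring
  have hgc1 : g c1 = 0 := by
    rw [hgdef]
    simp only
    rw [hEcc c1 hc1, hK1, EE]
    field_simp
    ring
  have hgc2 : g c2 = 0 := by
    rw [hgdef]
    simp only
    rw [hEcc c2 hc2, hK2, EE]
    field_simp
    ring
  have hEw : EE q c1 c2 ≠ 0 := by
    rw [EE]
    exact mul_ne_zero (mul_ne_zero (inv_ne_zero hc2) hθ2) (mul_ne_zero hθ3 hθ4)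
  have hvan := elliptic_vanishing hq1 hq0 hs hc1 h1 hgd hgq hgi hgc1 hc2 hEw hgc2
  intro x hx
  have h0 := hvan x hx
  rw [hgdef] at h0
  simp only at h0
  have hfx : f x = K1 * EE q c2 x + K2 * EE q c1 x := by
    have := sub_eq_zero.1 h0
    linear_combination this
  rw [hfx, hK1, hK2, EE, EE]
  ring

end
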